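/- For h = so(3) := span(P₁+P₅, P₂+P₆, P₇+P₈) ⊂ Λ²(ℝ⁸), the space K(h) of algebraic curvature tensors with values in h is trivial: every quadrilinear map R : (ℝ⁸)⁴ → ℝ with R(X,Y,Z,V) = −R(Y,X,Z,V), with (Z,V) ↦ R(X,Y,Z,V) lying in h for all X,Y, and satisfying the first Bianchi identity R(X,Y,Z,V)+R(Y,Z,X,V)+R(Z,X,Y,V) = 0, is identically zero. -/

import Mathlib

open scoped BigOperators
open Matrix

noncomputable section
namespace Spin7Paper

/-- ℝ⁸ -/
abbrev V8 := Fin 8 → ℝ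

/-- The space Λᵏ(ℝ⁸) of k-forms. -/
abbrev AltForm (k : ℕ) := AlternatingMap ℝ V8 ℝ (Fin k)

/-- standard basis vector -/
def eVec (i : Fin 8) : V8 := Pi.single i 1

/-- basis k-form e_{i₁…i_k} -/
def eForm {k : ℕ} (idx : Fin k → Fin 8) : AltForm k :=
  (Matrix.detRowAlternating : AlternatingMap ℝ (Fin k → ℝ) ℝ (Fin k)).compLinearMap
    (LinearMap.funLeft ℝ ℝ idx)

def e2 (i j : Fin 8) : AltForm 2 := eForm ![i, j]
def e3 (i j k : Fin 8) : AltForm 3 := eForm ![i, j, k]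
def e4 (i j k l : Fin 8) : AltForm 4 := eForm ![i, j, k, l]

/-- the 2-forms P₁,…,P₈ (note: indices here are 0-based). -/
def P1 : AltForm 2 := e2 2 4 + e2 3 5
def P2 : AltForm 2 := e2 2 5 - e2 3 4
def P3 : AltForm 2 := e2 0 4 + e2 1 5
def P4 : AltForm 2 := e2 0 5 - e2 1 4
def P5 : AltForm 2 := e2 0 2 + e2 1 3
def P6 : AltForm 2 := e2 0 3 - e2 1 2
def P7 : AltForm 2 := e2 0 1 - e2 2 3
def P8 : AltForm 2 := e2 2 3 - e2 4 5
def Q1 : AltForm 2 := (2 : ℝ) • e2 0 6 - e2 2 4 + e2 3 5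
def Q2 : AltForm 2 := (2 : ℝ) • e2 1 6 + e2 2 5 + e2 3 4
def Q3 : AltForm 2 := (2 : ℝ) • e2 2 6 + e2 0 4 - e2 1 5
def Q4 : AltForm 2 := (2 : ℝ) • e2 3 6 - e2 0 5 - e2 1 4
def Q5 : AltForm 2 := (2 : ℝ) • e2 4 6 - e2 0 2 + e2 1 3
def Q6 : AltForm 2 := (2 : ℝ) • e2 5 6 + e2 0 3 + e2 1 2
def S1 : AltForm 2 := e2 0 7 - e2 1 6
def S2 : AltForm 2 := e2 1 7 + e2 0 6
def S3 : AltForm 2 := e2 2 7 - e2 3 6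
def S4 : AltForm 2 := e2 3 7 + e2 2 6
def S5 : AltForm 2 := e2 4 7 - e2 5 6
def S6 : AltForm 2 := e2 5 7 + e2 4 6
def S7 : AltForm 2 := e2 6 7 - e2 4 5

/-- the Lie algebra spin(7) as the span of the 21 two-forms above -/
def spin7 : Submodule ℝ (AltForm 2) :=
  Submodule.span ℝ {P1, P2, P3, P4, P5, P6, P7, P8, Q1, Q2, Q3, Q4, Q5, Q6,
    S1, S2, S3, S4, S5, S6, S7}

/-- the Spin(7) fundamental 4-form Φ -/
def Phi : AltForm 4 :=
  e4 0 1 6 7 + e4 2 3 6 7 + e4 4 5 6 7 + e4 1 3 5 7 - e4 1 2 4 7 - e4 0 3 4 7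
    - e4 0 2 5 7 + e4 0 1 2 3 + e4 0 1 4 5 + e4 2 3 4 5 + e4 0 2 4 6 - e4 0 3 5 6
    - e4 1 2 5 6 - e4 1 3 4 6

/-- the skew-symmetric endomorphism of ℝ⁸ associated with a 2-form:
`x ↦ Σ_{i<j} ω_{ij} (⟨e_i,x⟩ e_j − ⟨e_j,x⟩ e_i)`. -/
def toEnd (ω : AltForm 2) : V8 →ₗ[ℝ] V8 where
  toFun x := fun j => ∑ i, ω ![eVec i, eVec j] * x i
  map_add' x y := by
    funext j
    simp [mul_add, Finset.sum_add_distrib]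
  map_smul' c x := by
    funext j
    simp only [Pi.smul_apply, smul_eq_mul, RingHom.id_apply, Finset.mul_sum]
    exact Finset.sum_congr rfl fun i _ => by ring

/-- the action of a skew-symmetric endomorphism `A` on k-forms:
`(A·τ)(X₁,…,X_k) = −Σ_m τ(X₁,…,A X_m,…,X_k)`. -/
def actEnd {k : ℕ} (A : V8 →ₗ[ℝ] V8) (τ : AltForm k) : (Fin k → V8) → ℝ :=
  fun X => -∑ m, τ (Function.update X m (A (X m)))

lemma toEnd_add (ω η : AltForm 2) : toEnd (ω + η) = toEnd ω + toEnd η := by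
  apply LinearMap.ext; intro x
  funext j
  simp [toEnd, add_mul, Finset.sum_add_distrib]

lemma toEnd_smul (c : ℝ) (ω : AltForm 2) : toEnd (c • ω) = c • toEnd ω := by
  apply LinearMap.ext; intro x
  funext j
  simp only [toEnd, AlternatingMap.smul_apply, smul_eq_mul, LinearMap.coe_mk, AddHom.coe_mk,
    LinearMap.smul_apply, Pi.smul_apply, Finset.mul_sum]
  exact Finset.sum_congr rfl fun i _ => by ring

lemma toEnd_zero : toEnd (0 : AltForm 2) = 0 := by
  apply LinearMap.ext; intro x
  funext j
  simp [toEnd]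

lemma actEnd_add {k : ℕ} (A B : V8 →ₗ[ℝ] V8) (τ : AltForm k) (X : Fin k → V8) :
    actEnd (A + B) τ X = actEnd A τ X + actEnd B τ X := by
  simp only [actEnd, LinearMap.add_apply]
  rw [← neg_add, ← Finset.sum_add_distrib]
  congr 1
  exact Finset.sum_congr rfl fun m _ => (τ.toMultilinearMap.map_update_add X m _ _)

lemma actEnd_smul {k : ℕ} (c : ℝ) (A : V8 →ₗ[ℝ] V8) (τ : AltForm k) (X : Fin k → V8) :
    actEnd (c • A) τ X = c * actEnd A τ X := by
  simp only [actEnd, LinearMap.smul_apply, mul_neg, Finset.mul_sum]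
  congr 1
  exact Finset.sum_congr rfl fun m _ => by
    simpa using (τ.toMultilinearMap.map_update_smul X m c (A (X m)))

lemma actEnd_zero {k : ℕ} (τ : AltForm k) (X : Fin k → V8) :
    actEnd (0 : V8 →ₗ[ℝ] V8) τ X = 0 := by
  simp [actEnd, MultilinearMap.map_update_zero]

/-- the isotropy algebra in spin(7) of a 3-form T -/
def isoSub (T : AltForm 3) : Submodule ℝ (AltForm 2) where
  carrier := {ω | ω ∈ spin7 ∧ ∀ X, actEnd (toEnd ω) T X = 0}
  zero_mem' := ⟨spin7.zero_mem, fun X => by rw [toEnd_zero]; exact actEnd_zero T X⟩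
  add_mem' := by
    rintro a b ⟨ha1, ha2⟩ ⟨hb1, hb2⟩
    exact ⟨spin7.add_mem ha1 hb1, fun X => by
      rw [toEnd_add, actEnd_add, ha2 X, hb2 X, add_zero]⟩
  smul_mem' := by
    rintro c a ⟨ha1, ha2⟩
    exact ⟨spin7.smul_mem c ha1, fun X => by
      rw [toEnd_smul, actEnd_smul, ha2 X, mul_zero]⟩

/-- E_{jk}: +1 in entry (j,k), −1 in entry (k,j) (0-based indices) -/
def Em (j k : Fin 8) : Matrix (Fin 8) (Fin 8) ℝ :=
  Matrix.single j k 1 - Matrix.single k j 1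

def Mmat : Fin 7 → Matrix (Fin 8) (Fin 8) ℝ :=
  ![Em 0 7 + Em 1 6 - Em 2 5 - Em 3 4,
    -Em 0 6 + Em 1 7 + Em 2 4 - Em 3 5,
    -Em 0 5 + Em 1 4 - Em 2 7 + Em 3 6,
    -Em 0 4 - Em 1 5 - Em 2 6 - Em 3 7,
    -Em 0 2 - Em 1 3 + Em 4 6 + Em 5 7,
    Em 0 3 - Em 1 2 - Em 4 7 + Em 5 6,
    Em 0 1 - Em 2 3 - Em 4 5 + Em 6 7]

/-- 16×16 matrix from four 8×8 blocks -/
def blk (A B C D : Matrix (Fin 8) (Fin 8) ℝ) : Matrix (Fin 16) (Fin 16) ℝ :=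
  Matrix.reindex finSumFinEquiv finSumFinEquiv (Matrix.fromBlocks A B C D)

/-- the Clifford matrices γ₁,…,γ₈ -/
def gamma : Fin 8 → Matrix (Fin 16) (Fin 16) ℝ :=
  Fin.snoc (fun i => blk 0 (Mmat i) (Mmat i) 0) (blk 0 1 (-1) 0)

/-- the space of real spinors Δ₈ = ℝ¹⁶ -/
abbrev Spinor := Fin 16 → ℝ

/-- standard basis spinor (0-based: `psi 0` is Ψ₁, …, `psi 15` is Ψ₁₆) -/
def psi (k : Fin 16) : Spinor := Pi.single k 1

/-- the spinor Ψ₀ = Ψ₉ − Ψ₁₀ -/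
def Psi0 : Spinor := psi 8 - psi 9

def gammaProd {p : ℕ} (f : Fin p → Fin 8) : Matrix (Fin 16) (Fin 16) ℝ :=
  (List.ofFn fun a => gamma (f a)).prod

/-- the Clifford action ρ of a p-form, as a 16×16 matrix; on an alternating form this
equals `Σ_{i₁<…<i_p} T(e_{i₁},…,e_{i_p}) γ_{i₁}⋯γ_{i_p}`. -/
def rhoF {p : ℕ} (T : (Fin p → V8) → ℝ) : Matrix (Fin 16) (Fin 16) ℝ :=
  (p.factorial : ℝ)⁻¹ • ∑ f : Fin p → Fin 8, T (fun a => eVec (f a)) • gammaProd f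

/-- the Clifford action of a vector X: ρ(X) = Σ xᵢ γᵢ. -/
def rhoVec (X : V8) : Matrix (Fin 16) (Fin 16) ℝ := ∑ i, X i • gamma i

/-- the wedge product (on alternating inputs):
`(α∧β)(X) = (1/(p! q!)) Σ_σ sgn σ · α(X_{σ∘castAdd}) · β(X_{σ∘natAdd})`. -/
def wedgeF {p q : ℕ} (α : (Fin p → V8) → ℝ) (β : (Fin q → V8) → ℝ) :
    (Fin (p + q) → V8) → ℝ :=
  fun X => ((p.factorial * q.factorial : ℕ) : ℝ)⁻¹ *
    ∑ σ : Equiv.Perm (Fin (p + q)), ((Equiv.Perm.sign σ : ℤ) : ℝ) *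
      α (fun i => X (σ (Fin.castAdd q i))) * β (fun j => X (σ (Fin.natAdd p j)))

/-- contraction X⌟τ -/
def contrF {p : ℕ} (X : V8) (τ : (Fin (p + 1) → V8) → ℝ) : (Fin p → V8) → ℝ :=
  fun Y => τ (Fin.cons X Y)

/-- the inner product on p-forms making the e_{i₁…i_p} (i₁<…<i_p) orthonormal -/
def formInnerF {p : ℕ} (α β : (Fin p → V8) → ℝ) : ℝ :=
  (p.factorial : ℝ)⁻¹ * ∑ f : Fin p → Fin 8,
    α (fun a => eVec (f a)) * β (fun a => eVec (f a))

/-- Λ³₈ = {X⌟Φ : X ∈ ℝ⁸} -/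
def Lam38 : Submodule ℝ (AltForm 3) := LinearMap.range (AlternatingMap.curryLeft Phi)

lemma wedgeF_add_left {p q : ℕ} (a b : AltForm p) (β : (Fin q → V8) → ℝ)
    (X : Fin (p + q) → V8) :
    wedgeF (⇑(a + b)) β X = wedgeF ⇑a β X + wedgeF ⇑b β X := by
  simp only [wedgeF, AlternatingMap.add_apply, add_mul, mul_add, Finset.sum_add_distrib]

lemma wedgeF_smul_left {p q : ℕ} (c : ℝ) (a : AltForm p) (β : (Fin q → V8) → ℝ)
    (X : Fin (p + q) → V8) :
    wedgeF (⇑(c • a)) β X = c * wedgeF ⇑a β X := by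
  simp only [wedgeF, AlternatingMap.smul_apply, smul_eq_mul, Finset.mul_sum]
  exact Finset.sum_congr rfl fun σ _ => by ring

/-- Λ³₄₈ = {γ ∈ Λ³(ℝ⁸) : γ∧Φ = 0} -/
def Lam348 : Submodule ℝ (AltForm 3) where
  carrier := {γ | ∀ X, wedgeF ⇑γ ⇑Phi X = 0}
  zero_mem' := fun X => by
    simp only [wedgeF, AlternatingMap.zero_apply, mul_zero, zero_mul,
      Finset.sum_const_zero]
  add_mem' := by
    intro a b ha hb X
    rw [wedgeF_add_left, ha X, hb X, add_zero]
  smul_mem' := by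
    intro c a ha X
    rw [wedgeF_smul_left, ha X, mul_zero]

end Spin7Paper

/-!
Antisymmetry in both pairs together with the Bianchi identity makes `R` pair-symmetric. Since
`A₁ = P₁+P₅`, `A₂ = P₂+P₆`, `A₃ = P₇+P₈` take the values of a dual basis on the pairs
`(e₁,e₃)`, `(e₁,e₄)`, `(e₁,e₂)`, the coefficients of `R` can be read off there, and pair symmetry
gives `R = Σ c_ab A_a ⊗ A_b` with a symmetric `3 × 3` matrix `c`. The Bianchi identity on six
quadruples of basis vectors then forces `c = 0`.
-/

theorem pair_symm_of_bianchi {α 𝕜 : Type*} [Field 𝕜] [NeZero (2 : 𝕜)]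
    (R : α → α → α → α → 𝕜)
    (h12 : ∀ X Y Z V, R X Y Z V = -R Y X Z V) (h34 : ∀ X Y Z V, R X Y Z V = -R X Y V Z)
    (hb : ∀ X Y Z V, R X Y Z V + R Y Z X V + R Z X Y V = 0) (X Y Z V : α) :
    R X Y Z V = R Z V X Y := by
  have h : (2 : 𝕜) * (R X Y Z V - R Z V X Y) = 0 := by
    linear_combination hb X Y Z V + h34 X Y Z V - hb X Y V Z - h12 X Z Y V + h34 X Z Y V
      - hb X Z V Y + h12 X V Y Z - h34 X V Y Z + h12 X V Z Y - h34 Y Z X V + hb Y Z V X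
      + h34 Y V X Z - h12 Y V Z X - h34 Z V X Y
  exact sub_eq_zero.mp ((mul_eq_zero.mp h).resolve_left two_ne_zero)

theorem AlternatingMap.map_vecCons_swap {R M N : Type*} [CommSemiring R] [AddCommMonoid M]
    [Module R M] [AddCommGroup N] [Module R N] (f : M [⋀^Fin 2]→ₗ[R] N) (x y : M) :
    f ![x, y] = -f ![y, x] := by
  rw [← f.map_swap ![y, x] (show (0 : Fin 2) ≠ 1 by decide)]
  congr 1
  ext i
  fin_cases i <;> rfl

section DualPairs

variable {ι α 𝕜 : Type*} [Fintype ι] [CommRing 𝕜]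

def pairTensor (ω : ι → α → α → 𝕜) (c : ι → ι → 𝕜) (X Y Z V : α) : 𝕜 :=
  ∑ a, ∑ b, c a b * ω a X Y * ω b Z V

variable [DecidableEq ι] {ω : ι → α → α → 𝕜} {d : ι → α × α}

theorem eq_sum_dualPair (hd : ∀ a b, ω a (d b).1 (d b).2 = if a = b then 1 else 0)
    {f : α → α → 𝕜} (hf : ∃ coef : ι → 𝕜, ∀ Z V, f Z V = ∑ a, coef a * ω a Z V) (Z V : α) :
    f Z V = ∑ a, f (d a).1 (d a).2 * ω a Z V := by
  obtain ⟨coef, hcoef⟩ := hf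
  have hdual : ∀ b, f (d b).1 (d b).2 = coef b := fun b => by simp [hcoef, hd]
  simp only [hdual, hcoef]

theorem eq_pairTensor_of_pair_symm (hd : ∀ a b, ω a (d b).1 (d b).2 = if a = b then 1 else 0)
    {R : α → α → α → α → 𝕜}
    (hslice : ∀ X Y, ∃ coef : ι → 𝕜, ∀ Z V, R X Y Z V = ∑ a, coef a * ω a Z V)
    (hsymm : ∀ X Y Z V, R X Y Z V = R Z V X Y) (X Y Z V : α) :
    R X Y Z V = pairTensor ω (fun a b => R (d a).1 (d a).2 (d b).1 (d b).2) X Y Z V := by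
  have hleft : ∀ X Y, ∃ coef : ι → 𝕜, ∀ Z V, R Z V X Y = ∑ a, coef a * ω a Z V :=
    fun X Y => by simpa only [hsymm X Y] using hslice X Y
  calc R X Y Z V
      = ∑ b, R X Y (d b).1 (d b).2 * ω b Z V := eq_sum_dualPair hd (hslice X Y) Z V
    _ = ∑ b, (∑ a, R (d a).1 (d a).2 (d b).1 (d b).2 * ω a X Y) * ω b Z V := by
        simp only [← eq_sum_dualPair hd (hleft _ _)]
    _ = _ := by
        simp only [pairTensor, Finset.sum_mul]
        exact Finset.sum_comm

end DualPairs

namespace Spin7Paper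

def so3Form (a : Fin 3) (X Y : V8) : ℝ := ![P1 + P5, P2 + P6, P7 + P8] a ![X, Y]

def so3DualPair : Fin 3 → V8 × V8 := ![(eVec 0, eVec 2), (eVec 0, eVec 3), (eVec 0, eVec 1)]

theorem e2_apply (i j : Fin 8) (Z V : V8) : e2 i j ![Z, V] = Z i * V j - Z j * V i := by
  rw [show e2 i j ![Z, V] = Matrix.det (Matrix.of fun r c => ![Z, V] r (![i, j] c)) from rfl,
    Matrix.det_fin_two]
  simp

theorem so3Form_swap (a : Fin 3) (X Y : V8) : so3Form a X Y = -so3Form a Y X :=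
  AlternatingMap.map_vecCons_swap _ X Y

section

attribute [local simp] pairTensor Fin.sum_univ_three so3Form P1 P2 P5 P6 P7 P8 e2_apply eVec

theorem so3Form_dualPair (a b : Fin 3) :
    so3Form a (so3DualPair b).1 (so3DualPair b).2 = if a = b then 1 else 0 := by
  fin_cases a <;> fin_cases b <;> simp [so3DualPair]

theorem eq_zero_of_bianchi_pairTensor_so3Form {c : Fin 3 → Fin 3 → ℝ} (hc : ∀ a b, c a b = c b a)
    (hb : ∀ X Y Z V, pairTensor so3Form c X Y Z V + pairTensor so3Form c Y Z X V
      + pairTensor so3Form c Z X Y V = 0) :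
    c = 0 := by
  have h0123 : c 0 0 + c 1 1 = 0 := by
    linear_combination (norm := simp) -hb (eVec 0) (eVec 1) (eVec 2) (eVec 3)
  have h0235 : c 0 0 = c 1 1 := by
    linear_combination (norm := simp) hb (eVec 0) (eVec 2) (eVec 3) (eVec 5)
  have h0234 : c 1 0 + c 0 1 = 0 := by
    linear_combination (norm := simp) -hb (eVec 0) (eVec 2) (eVec 3) (eVec 4)
  have h0124 : c 2 0 = 0 := by
    linear_combination (norm := simp) hb (eVec 0) (eVec 1) (eVec 2) (eVec 4)
  have h0125 : c 2 1 = 0 := by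
    linear_combination (norm := simp) hb (eVec 0) (eVec 1) (eVec 2) (eVec 5)
  have h0145 : c 2 2 = 0 := by
    linear_combination (norm := simp) -hb (eVec 0) (eVec 1) (eVec 4) (eVec 5)
  ext a b
  fin_cases a <;> fin_cases b <;> simp <;> linarith [hc 0 1, hc 0 2, hc 1 2]

end

/-- K(so(3)) is trivial. -/
theorem statement5 (R : MultilinearMap ℝ (fun _ : Fin 4 => V8) ℝ)
    (hanti : ∀ X Y Z V : V8, R ![X, Y, Z, V] = -R ![Y, X, Z, V])
    (hval : ∀ X Y : V8, ∃ a b c : ℝ, ∀ Z V : V8,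
      R ![X, Y, Z, V] = a * (P1 + P5) ![Z, V] + b * (P2 + P6) ![Z, V] + c * (P7 + P8) ![Z, V])
    (hbianchi : ∀ X Y Z V : V8, R ![X, Y, Z, V] + R ![Y, Z, X, V] + R ![Z, X, Y, V] = 0) :
    R = 0 := by
  set T : V8 → V8 → V8 → V8 → ℝ := fun X Y Z V => R ![X, Y, Z, V]
  have hslice : ∀ X Y, ∃ coef : Fin 3 → ℝ, ∀ Z V, T X Y Z V = ∑ a, coef a * so3Form a Z V := by
    intro X Y
    obtain ⟨a, b, c, h⟩ := hval X Y
    exact ⟨![a, b, c], fun Z V => by simp [T, h, Fin.sum_univ_three, so3Form]⟩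
  have hanti2 : ∀ X Y Z V, T X Y Z V = -T X Y V Z := by
    intro X Y Z V
    obtain ⟨coef, h⟩ := hslice X Y
    simp only [h, so3Form_swap _ Z, mul_neg, Finset.sum_neg_distrib]
  have hsymm := pair_symm_of_bianchi T hanti hanti2 hbianchi
  have hrepr := eq_pairTensor_of_pair_symm so3Form_dualPair hslice hsymm
  have hc := eq_zero_of_bianchi_pairTensor_so3Form
    (c := fun a b => T (so3DualPair a).1 (so3DualPair a).2 (so3DualPair b).1 (so3DualPair b).2)
    (fun a b => hsymm _ _ _ _)
    (by simpa only [← hrepr] using hbianchi)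
  refine MultilinearMap.ext fun v => ?_
  have hv : v = ![v 0, v 1, v 2, v 3] := by ext i; fin_cases i <;> rfl
  rw [hv]
  change T _ _ _ _ = 0
  rw [hrepr, hc]
  simp [pairTensor]

end Spin7Paper
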